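/- Suppose a function φ ∈ C^{1,2} and a bounded function u on (0,∞)×𝒪 satisfy: (i) u(t*,x*) > φ(t*,x*) − C₂, (ii) u(t,x) ≤ φ(t,x) − C₁ for all (t,x) ∈ ∂𝒩_δ, and (iii) φ(t*,x*) ≥ E[φ(t*−ν, X(ν)) Y(ν)] for a stopping time ν with (t*−ν, X(ν)) ∈ ∂𝒩_δ ∪ ({0}×𝒪) a.s. and Y(ν) > 0. Then u(t*,x*) > E[(u(t*−ν, X(ν)) + C₁ − C₂/Y_min) Y(ν)] for suitable positive constants, contradicting the martingale identity E[u(t*−ν, X(ν)) Y(ν)] = u(t*,x*) when C₂ ≤ C₁ Y_min where Y_min is a lower bound for Y(ν). -/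

import Mathlib

open MeasureTheory

/-! Integrate the boundary gap `u ≤ φ - C₁` against the positive weight `Y(ν)`: by the
supermartingale inequality for `φ`, `E[u Y] ≤ φ(t*, x*) - C₁ E[Y] ≤ φ(t*, x*) - C₁ Ymin`,
which is at most `φ(t*, x*) - C₂ < u(t*, x*)`. This contradicts the martingale identity
`E[u Y] = u(t*, x*)`. -/

section

variable {Ω : Type*} [MeasurableSpace Ω] {μ : Measure Ω} {U Φ Y : Ω → ℝ} {c m : ℝ}

theorem integral_mul_le_integral_mul_sub_of_le_sub (hY : ∀ ω, 0 ≤ Y ω)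
    (hUΦ : ∀ ω, U ω ≤ Φ ω - c) (hUint : Integrable (fun ω => U ω * Y ω) μ)
    (hΦint : Integrable (fun ω => Φ ω * Y ω) μ) (hYint : Integrable Y μ) :
    ∫ ω, U ω * Y ω ∂μ ≤ ∫ ω, Φ ω * Y ω ∂μ - c * ∫ ω, Y ω ∂μ := by
  have hpointwise : ∀ ω, U ω * Y ω ≤ Φ ω * Y ω - c * Y ω := fun ω => by
    simpa only [sub_mul] using mul_le_mul_of_nonneg_right (hUΦ ω) (hY ω)
  calc ∫ ω, U ω * Y ω ∂μ ≤ ∫ ω, (Φ ω * Y ω - c * Y ω) ∂μ :=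
        integral_mono hUint (hΦint.sub (hYint.const_mul c)) hpointwise
    _ = ∫ ω, Φ ω * Y ω ∂μ - c * ∫ ω, Y ω ∂μ := by
        rw [integral_sub hΦint (hYint.const_mul c), integral_const_mul]

theorem le_integral_of_forall_le [IsProbabilityMeasure μ] (hYint : Integrable Y μ)
    (hY : ∀ ω, m ≤ Y ω) : m ≤ ∫ ω, Y ω ∂μ := by
  simpa using integral_mono (integrable_const m) hYint hY

end

theorem stmt_17_general {Ω : Type*} [MeasurableSpace Ω] (μ : Measure Ω) [IsProbabilityMeasure μ]
    (Uν Φν Yν : Ω → ℝ) (ustar φstar C₁ C₂ Ymin : ℝ)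
    (hC₁ : 0 < C₁) (hYmin : 0 < Ymin)
    -- (i) approximation gap:
    (hi : ustar > φstar - C₂)
    -- (ii) boundary gap:
    (hii : ∀ ω, Uν ω ≤ Φν ω - C₁)
    -- (iii) supermartingale inequality for the test function:
    (hiii : φstar ≥ ∫ ω, Φν ω * Yν ω ∂μ)
    (hY : ∀ ω, Ymin ≤ Yν ω)
    (hCC : C₂ ≤ C₁ * Ymin)
    (hUint : Integrable (fun ω => Uν ω * Yν ω) μ)
    (hΦint : Integrable (fun ω => Φν ω * Yν ω) μ)
    (hYint : Integrable Yν μ)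
    -- the martingale identity for u(t* − t, X(t)) Y(t):
    (hmart : ∫ ω, Uν ω * Yν ω ∂μ = ustar) :
    False := by
  have hboundary := integral_mul_le_integral_mul_sub_of_le_sub
    (fun ω => hYmin.le.trans (hY ω)) hii hUint hΦint hYint
  have hmean : C₁ * Ymin ≤ C₁ * ∫ ω, Yν ω ∂μ :=
    mul_le_mul_of_nonneg_left (le_integral_of_forall_le hYint hY) hC₁.le
  linarith

/-- Abstract version of the contradiction argument (2.13): `Uν`, `Φν`, `Yν` stand for the
random variables `u(t* − ν, X(ν))`, `φ(t* − ν, X(ν))` and `Y(ν)`, while `ustar = u(t*, x*)`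
and `φstar = φ(t*, x*)`. The hypotheses combine the approximation gap (i), the boundary
gap (ii), the test-function supermartingale inequality (iii), the lower bound `Ymin` for
`Y(ν)`, the relation `C₂ ≤ C₁ Ymin`, and the martingale identity; together they are
contradictory. -/
theorem stmt_17 {Ω : Type*} [MeasurableSpace Ω] (μ : Measure Ω) [IsProbabilityMeasure μ]
    (Uν Φν Yν : Ω → ℝ) (ustar φstar C₁ C₂ Ymin : ℝ)
    (hC₁ : 0 < C₁) (hC₂ : 0 < C₂) (hYmin : 0 < Ymin)
    -- (i) approximation gap:
    (hi : ustar > φstar - C₂)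
    -- (ii) boundary gap:
    (hii : ∀ ω, Uν ω ≤ Φν ω - C₁)
    -- (iii) supermartingale inequality for the test function:
    (hiii : φstar ≥ ∫ ω, Φν ω * Yν ω ∂μ)
    (hY : ∀ ω, Ymin ≤ Yν ω)
    (hCC : C₂ ≤ C₁ * Ymin)
    (hUint : Integrable (fun ω => Uν ω * Yν ω) μ)
    (hΦint : Integrable (fun ω => Φν ω * Yν ω) μ)
    (hYint : Integrable Yν μ)
    -- the martingale identity for u(t* − t, X(t)) Y(t):
    (hmart : ∫ ω, Uν ω * Yν ω ∂μ = ustar) :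
    False :=
  stmt_17_general μ Uν Φν Yν ustar φstar C₁ C₂ Ymin hC₁ hYmin hi hii hiii hY hCC hUint hΦint hYint
    hmart
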